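/- In Thompson's group F (infinite presentation), let p = x_0³ x_1^{2i+1} x_{2i+5}³ x_{2i+6}^{-2} x_{2i+4}^{-1} x_2^{-1} x_1^{-2i} x_0^{-3} for some i ≥ 1, and set q = x_1^{-1} p x_1 p^{-1}. Then q = x_1² x_2 x_1^{-3}; consequently h := x_1^{-2} q x_1² equals x_2 x_1^{-1} = (x_1 x_2^{-1})^{-1} and k := x_1 h x_1^{-1} equals x_1 x_2 x_1^{-2} = (x_1² x_2^{-1} x_1^{-1})^{-1}. -/

import Mathlib

/-- The defining relators of Thompson's group `F`:
`x_j x_i x_{j+1}⁻¹ x_i⁻¹` for `i < j`, encoding `x_j x_i = x_i x_{j+1}`. -/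
def thompsonRels : Set (FreeGroup ℕ) :=
  {r | ∃ i j : ℕ, i < j ∧
    r = FreeGroup.of j * FreeGroup.of i * (FreeGroup.of (j + 1))⁻¹ * (FreeGroup.of i)⁻¹}

/-- Thompson's group `F`, via its infinite presentation
`⟨x_0, x_1, … | x_j x_i = x_i x_{j+1} for i < j⟩`. -/
abbrev ThompsonF : Type := PresentedGroup thompsonRels

/-- The generator `x_n` of Thompson's group `F`. -/
def x (n : ℕ) : ThompsonF := PresentedGroup.of n

/-!
Conjugating by a power `x_m ^ n` shifts every generator `x_j` with `j > m` by `n`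
(`x_m⁻ⁿ x_j x_mⁿ = x_{j+n}`). Following `x_1` through the letters of `p` from right to left,
these shifts carry it to `x_4`, `x_{2i+4}`, `x_{2i+5}`, `x_{2i+6}`, which `x_{2i+6}⁻²` fixes and
`x_{2i+5}³` turns into `x_{2i+5}³ x_{2i+6} x_{2i+5}⁻³`; the last two letters shift this back down to
`x_1³ x_2 x_1⁻³`. Hence `p x_1 p⁻¹ = x_1³ x_2 x_1⁻³`, so `q = x_1⁻¹ (p x_1 p⁻¹)` is `x_1² x_2 x_1⁻³`,
and `h`, `k` are obtained from it by free reduction.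
-/

lemma x_mul_x_of_lt {m j : ℕ} (h : m < j) : x j * x m = x m * x (j + 1) := by
  have hrel : x j * x m * (x (j + 1))⁻¹ * (x m)⁻¹ = 1 :=
    (QuotientGroup.eq_one_iff _).mpr (Subgroup.subset_normalClosure ⟨m, j, h, rfl⟩)
  rwa [mul_inv_eq_one, mul_inv_eq_iff_eq_mul] at hrel

lemma semiconjBy_x_pow {m j k : ℕ} (h : m < j) (n : ℕ) (hk : j + n = k) :
    SemiconjBy (x m ^ n) (x k) (x j) := by
  subst hk
  induction n with
  | zero => exact SemiconjBy.one_left _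
  | succ n ih =>
    rw [pow_succ, ← add_assoc]
    exact ih.mul_left (x_mul_x_of_lt (by omega)).symm

lemma semiconjBy_word_x_one (i : ℕ) :
    SemiconjBy (x 0 ^ 3 * x 1 ^ (2 * i + 1) * x (2 * i + 5) ^ 3 * (x (2 * i + 6) ^ 2)⁻¹ *
      (x (2 * i + 4))⁻¹ * (x 2)⁻¹ * (x 1 ^ (2 * i))⁻¹ * (x 0 ^ 3)⁻¹) (x 1)
      (x 1 ^ 3 * x 2 * (x 1 ^ 3)⁻¹) := by
  have h₁ : SemiconjBy (x 0 ^ 3) (x 4) (x 1) := semiconjBy_x_pow (by norm_num) 3 rfl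
  have h₂ : SemiconjBy (x 0 ^ 3) (x 5) (x 2) := semiconjBy_x_pow (by norm_num) 3 rfl
  have h₃ : SemiconjBy (x 1 ^ (2 * i + 1)) (x (2 * i + 5)) (x 4) :=
    semiconjBy_x_pow (by norm_num) _ (by ring)
  have h₄ : SemiconjBy (x 1 ^ (2 * i + 1)) (x (2 * i + 6)) (x 5) :=
    semiconjBy_x_pow (by norm_num) _ (by ring)
  have h₅ : SemiconjBy (x 1 ^ (2 * i)) (x (2 * i + 4)) (x 4) :=
    semiconjBy_x_pow (by norm_num) _ (by ring)
  have h₆ : SemiconjBy (x 2) (x (2 * i + 5)) (x (2 * i + 4)) := by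
    simpa using semiconjBy_x_pow (by omega) 1 rfl
  have h₇ : SemiconjBy (x (2 * i + 4)) (x (2 * i + 6)) (x (2 * i + 5)) := by
    simpa using semiconjBy_x_pow (by omega) 1 rfl
  refine .mul_left ?_ h₁.inv_symm_left
  refine .mul_left ?_ h₅.inv_symm_left
  refine .mul_left ?_ h₆.inv_symm_left
  refine .mul_left ?_ h₇.inv_symm_left
  refine .mul_left ?_ (Commute.pow_self (x (2 * i + 6)) 2).inv_left
  refine .mul_left ?_ (SemiconjBy.conj_mk (x (2 * i + 5) ^ 3) (x (2 * i + 6)))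
  exact .mul_left (((h₁.pow_right 3).mul_right h₂).mul_right (h₁.pow_right 3).inv_right)
    (((h₃.pow_right 3).mul_right h₄).mul_right (h₃.pow_right 3).inv_right)

theorem q_h_k_normal_form_general (i : ℕ) (p q h k : ThompsonF)
    (hp : p = x 0 ^ 3 * x 1 ^ (2 * i + 1) * (x (2 * i + 5)) ^ 3 * (x (2 * i + 6)) ^ (-2 : ℤ) *
      (x (2 * i + 4))⁻¹ * (x 2)⁻¹ * (x 1) ^ (-(2 * i : ℤ)) * (x 0) ^ (-3 : ℤ))
    (hq : q = (x 1)⁻¹ * p * x 1 * p⁻¹)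
    (hh : h = (x 1) ^ (-2 : ℤ) * q * x 1 ^ 2)
    (hk : k = x 1 * h * (x 1)⁻¹) :
    q = x 1 ^ 2 * x 2 * (x 1) ^ (-3 : ℤ) ∧
      h = x 2 * (x 1)⁻¹ ∧ h = (x 1 * (x 2)⁻¹)⁻¹ ∧
      k = x 1 * x 2 * (x 1) ^ (-2 : ℤ) ∧ k = (x 1 ^ 2 * (x 2)⁻¹ * (x 1)⁻¹)⁻¹ := by
  have hp_x_one : p * x 1 = x 1 ^ 3 * x 2 * (x 1 ^ 3)⁻¹ * p := by
    have hp_word : p = x 0 ^ 3 * x 1 ^ (2 * i + 1) * x (2 * i + 5) ^ 3 * (x (2 * i + 6) ^ 2)⁻¹ *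
        (x (2 * i + 4))⁻¹ * (x 2)⁻¹ * (x 1 ^ (2 * i))⁻¹ * (x 0 ^ 3)⁻¹ := by
      rw [hp]; group
    exact hp_word ▸ semiconjBy_word_x_one i
  have hq' : q = x 1 ^ 2 * x 2 * (x 1) ^ (-3 : ℤ) := by
    rw [hq, mul_assoc _ p, hp_x_one]; group
  subst hh hk
  refine ⟨hq', ?_, ?_, ?_, ?_⟩ <;> rw [hq'] <;> group

/-- With `p = x_0³ x_1^{2i+1} x_{2i+5}³ x_{2i+6}⁻² x_{2i+4}⁻¹ x_2⁻¹ x_1^{-2i} x_0⁻³` (for some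
`i ≥ 1`) and `q = x_1⁻¹ p x_1 p⁻¹`, one has `q = x_1² x_2 x_1⁻³`; consequently
`h = x_1⁻² q x_1²` equals `x_2 x_1⁻¹ = (x_1 x_2⁻¹)⁻¹ = w_1⁻¹` and `k = x_1 h x_1⁻¹` equals
`x_1 x_2 x_1⁻² = (x_1² x_2⁻¹ x_1⁻¹)⁻¹ = y_1⁻¹`. -/
theorem q_h_k_normal_form (i : ℕ) (hi : 1 ≤ i) (p q h k : ThompsonF)
    (hp : p = x 0 ^ 3 * x 1 ^ (2 * i + 1) * (x (2 * i + 5)) ^ 3 * (x (2 * i + 6)) ^ (-2 : ℤ) *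
      (x (2 * i + 4))⁻¹ * (x 2)⁻¹ * (x 1) ^ (-(2 * i : ℤ)) * (x 0) ^ (-3 : ℤ))
    (hq : q = (x 1)⁻¹ * p * x 1 * p⁻¹)
    (hh : h = (x 1) ^ (-2 : ℤ) * q * x 1 ^ 2)
    (hk : k = x 1 * h * (x 1)⁻¹) :
    q = x 1 ^ 2 * x 2 * (x 1) ^ (-3 : ℤ) ∧
      h = x 2 * (x 1)⁻¹ ∧ h = (x 1 * (x 2)⁻¹)⁻¹ ∧
      k = x 1 * x 2 * (x 1) ^ (-2 : ℤ) ∧ k = (x 1 ^ 2 * (x 2)⁻¹ * (x 1)⁻¹)⁻¹ :=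
  q_h_k_normal_form_general i p q h k hp hq hh hk
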